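/- arXiv:2301.13393 — 2 statements merged into one kernel-verified Lean document; each statement's English description precedes it below -/
import Mathlib

section
/- Fix K ≥ 2, q ≥ 1, and σ̄² > 0. Let v₁, …, v_m be nonnegative reals with m ≤ K, suppose any q of the v_i sum to at most σ̄², and suppose ∑_{i=1}^m v_i ≤ Q·σ̄² where Q := ⌈K/q⌉. If ∑_{i=1}^m v_i ∈ ((r−1)·σ̄², r·σ̄²] for some positive integer r, then there exists a partition of {1,…,m} into at most 2r−1 blocks such that the sum of v_i over each block is at most σ̄². -/
open Finset

lemma greedy_aux (s : ℝ) (hs : 0 < s) :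
    ∀ (r m : ℕ) (v : ℕ → ℝ), (∀ i, 0 ≤ v i) → (∀ i, v i ≤ s) →
    (∑ i ∈ Finset.range m, v i) ≤ ((r : ℝ) + 1) * s →
    ∃ f : ℕ → ℕ, (∀ i, i < m → f i < 2 * r + 1) ∧
      ∀ b, ∑ i ∈ (Finset.range m).filter (fun i => f i = b), v i ≤ s := by
  classical
  intro r
  induction r with
  | zero =>
    intro m v hv0 hv1 htot
    refine ⟨fun _ => 0, fun i _ => by simp, fun b => ?_⟩
    by_cases hb : b = 0
    · subst hb
      have : (Finset.range m).filter (fun i => (0 : ℕ) = 0) = Finset.range m := by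
        simp
      rw [this]
      simpa using htot
    · have : (Finset.range m).filter (fun i => (0 : ℕ) = b) = ∅ := by
        simp [Ne.symm hb]
      rw [this]; simpa using hs.le
  | succ r ih =>
    intro m v hv0 hv1 htot
    by_cases hT : ∑ i ∈ Finset.range m, v i ≤ s
    · refine ⟨fun _ => 0, fun i _ => by simp, fun b => ?_⟩
      by_cases hb : b = 0
      · subst hb
        have : (Finset.range m).filter (fun i => (0 : ℕ) = 0) = Finset.range m := by simp
        rw [this]; exact hT
      · have : (Finset.range m).filter (fun i => (0 : ℕ) = b) = ∅ := by
          simp [Ne.symm hb]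
        rw [this]; simpa using hs.le
    · push_neg at hT
      set P := Nat.findGreatest (fun p => ∑ i ∈ Finset.range p, v i ≤ s) m with hPdef
      have hP0 : ∑ i ∈ Finset.range P, v i ≤ s :=
        Nat.findGreatest_spec (P := fun p => ∑ i ∈ Finset.range p, v i ≤ s)
          (Nat.zero_le m) (by simpa using hs.le)
      have hPle : P ≤ m := Nat.findGreatest_le m
      have hPm : P < m := by
        rcases hPle.lt_or_eq with h | h
        · exact h
        · exfalso; rw [h] at hP0; linarith
      have hP1 : s < ∑ i ∈ Finset.range (P + 1), v i := by
        have h := Nat.findGreatest_is_greatest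
          (P := fun p => ∑ i ∈ Finset.range p, v i ≤ s) (n := m) (k := P + 1)
          (by omega) (by omega)
        exact not_le.mp h
      set m' := m - (P + 1) with hm'def
      have htail : ∑ j ∈ Finset.range m', v (P + 1 + j) ≤ ((r : ℝ) + 1) * s := by
        have hsplit : ∑ i ∈ Finset.range (P+1), v i + ∑ i ∈ Finset.Ico (P+1) m, v i
            = ∑ i ∈ Finset.range m, v i := Finset.sum_range_add_sum_Ico v (by omega)
        have hIco : ∑ i ∈ Finset.Ico (P+1) m, v i
            = ∑ j ∈ Finset.range m', v (P + 1 + j) := by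
          rw [Finset.sum_Ico_eq_sum_range]
        push_cast at htot
        rw [← hIco]
        linarith
      clear_value P
      obtain ⟨g, hg1, hg2⟩ := ih m' (fun j => v (P + 1 + j)) (fun j => hv0 _) (fun j => hv1 _) htail
      clear_value m'
      refine ⟨fun i => if i < P then 0 else if i = P then 1 else g (i - (P + 1)) + 2, ?_, ?_⟩
      · intro i him
        dsimp only
        split_ifs with h1 h2
        · omega
        · omega
        · have := hg1 (i - (P + 1)) (by omega); omega
      · intro b
        match b with
        | 0 =>
          have hset : (Finset.range m).filter
              (fun i => (if i < P then 0 else if i = P then 1 else g (i - (P + 1)) + 2) = 0)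
              = Finset.range P := by
            ext i
            simp only [Finset.mem_filter, Finset.mem_range]
            constructor
            · rintro ⟨him, hfi⟩
              split_ifs at hfi with h1 h2
              exact h1
            · intro h
              exact ⟨by omega, by rw [if_pos h]⟩
          rw [hset]; exact hP0
        | 1 =>
          have hset : (Finset.range m).filter
              (fun i => (if i < P then 0 else if i = P then 1 else g (i - (P + 1)) + 2) = 1)
              = {P} := by
            ext i
            simp only [Finset.mem_filter, Finset.mem_range, Finset.mem_singleton]
            constructor
            · rintro ⟨him, hfi⟩
              split_ifs at hfi with h1 h2
              · omega
              · omega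
            · intro h
              refine ⟨by omega, ?_⟩
              rw [if_neg (by omega : ¬ i < P), if_pos h]
          rw [hset, Finset.sum_singleton]; exact hv1 P
        | (b + 2) =>
          have hset : (Finset.range m).filter
              (fun i => (if i < P then 0 else if i = P then 1 else g (i - (P + 1)) + 2) = b + 2)
              = ((Finset.range m').filter (fun j => g j = b)).map
                ⟨fun j => P + 1 + j, add_right_injective (P + 1)⟩ := by
            ext i
            simp only [Finset.mem_filter, Finset.mem_range, Finset.mem_map,
              Function.Embedding.coeFn_mk]
            constructor
            · rintro ⟨him, hfi⟩
              split_ifs at hfi with h1 h2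
              · exact ⟨i - (P + 1), ⟨by omega, by omega⟩, by omega⟩
              · exact ⟨i - (P + 1), ⟨by omega, by omega⟩, by omega⟩
            · rintro ⟨j, ⟨hj, hgj⟩, rfl⟩
              have h1 : ¬ (P + 1 + j < P) := by omega
              have h2 : ¬ (P + 1 + j = P) := by omega
              refine ⟨by omega, ?_⟩
              rw [if_neg h1, if_neg h2]
              have h3 : P + 1 + j - (P + 1) = j := by omega
              rw [h3, hgj]
          rw [hset, Finset.sum_map]
          exact hg2 b


/-- Greedy-split lemma: nonnegative values `v₁, …, v_m`, each at most `σ̄²`,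
any `q` of which sum to at most `σ̄²`, with total sum at most `Q·σ̄²` and
lying in `((r-1)σ̄², rσ̄²]`, can be partitioned into at most `2r-1` blocks
each of sum at most `σ̄²`. -/
theorem stmt_6 (K q m r : ℕ) (sbarsq : ℝ) (v : Fin m → ℝ)
    (hK : 2 ≤ K) (hq : 1 ≤ q) (hsbar : 0 < sbarsq)
    (hm : m ≤ K) (hr : 1 ≤ r)
    (hv : ∀ i, 0 ≤ v i)
    (hsingle : ∀ i, v i ≤ sbarsq)
    (hqsum : ∀ s : Finset (Fin m), s.card ≤ q → ∑ i ∈ s, v i ≤ sbarsq)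
    (htot : ∑ i, v i ≤ (Nat.ceil ((K : ℝ) / q) : ℝ) * sbarsq)
    (hlow : ((r : ℝ) - 1) * sbarsq < ∑ i, v i)
    (hhigh : ∑ i, v i ≤ (r : ℝ) * sbarsq) :
    ∃ f : Fin m → Fin (2 * r - 1),
      ∀ b : Fin (2 * r - 1), ∑ i ∈ Finset.univ.filter (fun i => f i = b), v i ≤ sbarsq := by
  classical
  set V : ℕ → ℝ := fun i => if h : i < m then v ⟨i, h⟩ else 0 with hVdef
  have hV0 : ∀ i, 0 ≤ V i := by
    intro i; simp only [hVdef]; split_ifs with h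
    · exact hv _
    · exact le_refl 0
  have hV1 : ∀ i, V i ≤ sbarsq := by
    intro i; simp only [hVdef]; split_ifs with h
    · exact hsingle _
    · exact hsbar.le
  have hVsum : ∑ i ∈ Finset.range m, V i = ∑ i, v i := by
    rw [← Fin.sum_univ_eq_sum_range]
    refine Finset.sum_congr rfl fun i _ => ?_
    simp [hVdef, i.isLt]
  have hVtot : ∑ i ∈ Finset.range m, V i ≤ (((r - 1 : ℕ) : ℝ) + 1) * sbarsq := by
    rw [hVsum]
    have hcast : (((r - 1 : ℕ) : ℝ) + 1) = (r : ℝ) := by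
      rw [Nat.cast_sub hr]; push_cast; ring
    rw [hcast]; exact hhigh
  obtain ⟨f, hf1, hf2⟩ := greedy_aux sbarsq hsbar (r - 1) m V hV0 hV1 hVtot
  have h2r : 2 * (r - 1) + 1 = 2 * r - 1 := by omega
  refine ⟨fun i => ⟨f i, by have := hf1 i i.isLt; omega⟩, fun b => ?_⟩
  have key : ∑ i ∈ Finset.univ.filter
      (fun i : Fin m => (⟨f i, by have := hf1 i i.isLt; omega⟩ : Fin (2 * r - 1)) = b), v i
      = ∑ i ∈ (Finset.range m).filter (fun i => f i = (b : ℕ)), V i := by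
    rw [Finset.sum_filter, Finset.sum_filter, ← Fin.sum_univ_eq_sum_range]
    refine Finset.sum_congr rfl fun i _ => ?_
    have hVi : V (i : ℕ) = v i := by simp [hVdef, i.isLt]
    rw [hVi]
    congr 1
    simp [Fin.ext_iff]
  rw [key]
  exact hf2 (b : ℕ)
end

section
/- Let μ ∈ (0, 1/2) and a̲ ∈ (0, 1/2) with μ < a̲, and suppose μ(1−μ) < a̲(1−a̲). Then d(μ, a̲) ≤ [μ(1−μ) − a̲(1−a̲)]² / (a̲·(1/2 − a̲)²), where d is the binary KL divergence. -/
theorem stmt_11 (μ a : ℝ) (hμ : μ ∈ Set.Ioo (0:ℝ) (1/2)) (ha : a ∈ Set.Ioo (0:ℝ) (1/2))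
    (hμa : μ < a) (hvar : μ * (1 - μ) < a * (1 - a)) :
    μ * Real.log (μ / a) + (1 - μ) * Real.log ((1 - μ) / (1 - a)) ≤
      (μ * (1 - μ) - a * (1 - a)) ^ 2 / (a * (1/2 - a) ^ 2) := by
  obtain ⟨hμ0, hμ2⟩ := hμ
  obtain ⟨ha0, ha2⟩ := ha
  have ha1 : a < 1 := by linarith
  have hμ1 : μ < 1 := by linarith
  have h1 : Real.log (μ / a) ≤ μ / a - 1 :=
    Real.log_le_sub_one_of_pos (by positivity)
  have h2 : Real.log ((1 - μ) / (1 - a)) ≤ (1 - μ) / (1 - a) - 1 :=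
    Real.log_le_sub_one_of_pos (by apply div_pos <;> linarith)
  have step1 : μ * Real.log (μ / a) + (1 - μ) * Real.log ((1 - μ) / (1 - a)) ≤
      μ * (μ / a - 1) + (1 - μ) * ((1 - μ) / (1 - a) - 1) := by
    have hμpos : (0:ℝ) < μ := hμ0
    have h1μ : (0:ℝ) < 1 - μ := by linarith
    nlinarith [mul_le_mul_of_nonneg_left h1 hμpos.le,
      mul_le_mul_of_nonneg_left h2 h1μ.le]
  refine step1.trans ?_
  have ha' : (0:ℝ) < 1 - a := by linarith
  have hd : (0:ℝ) < a * (1/2 - a) ^ 2 := mul_pos ha0 (pow_pos (by linarith) 2)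
  have e1 : μ * (μ / a - 1) + (1 - μ) * ((1 - μ) / (1 - a) - 1) =
      (μ - a) ^ 2 / (a * (1 - a)) := by
    field_simp
    ring
  rw [e1, div_le_div_iff₀ (by positivity) hd]
  have key : (1/2 - a)^2 ≤ (1 - μ - a)^2 * (1 - a) := by
    nlinarith [sq_nonneg (1 - μ - a), sq_nonneg (1/2 - a), sq_nonneg (a - μ)]
  nlinarith [sq_nonneg (μ - a), mul_le_mul_of_nonneg_left key (sq_nonneg (μ - a))]
end
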